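/- arXiv:2409.06168 — 4 statements merged into one kernel-verified Lean document; each statement's English description precedes it below -/
import Mathlib

section
/- Let Q, R : ℤ × ℝ → ℂ be differentiable in the second (time) variable. For z ∈ ℂ \ {0} define the 2×2 matrices M(n,t,z) = [[z, Q(n,t)], [R(n,t), z⁻¹]] and N(n,t,z) = (1/2)·[[z² − z⁻² − 2Q(n,t)R(n−1,t), 2Q(n,t)z + 2Q(n−1,t)z⁻¹], [2R(n−1,t)z + 2R(n,t)z⁻¹, z⁻² − z² − 2R(n,t)Q(n−1,t)]]. Then the zero-curvature (compatibility) equation ∂ₜM(n,t,z) = N(n+1,t,z)·M(n,t,z) − M(n,t,z)·N(n,t,z) holds for all n ∈ ℤ, t ∈ ℝ and all z ∈ ℂ \ {0} if and only if (Q,R) solves the coupled semi-discrete mKdV system ∂ₜQ(n,t) = (1 − Q(n,t)R(n,t))(Q(n+1,t) − Q(n−1,t)) and ∂ₜR(n,t) = (1 − Q(n,t)R(n,t))(R(n+1,t) − R(n−1,t)). -/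
open Matrix

/-- The Ablowitz–Ladik spectral matrix `M(n,t,z)`. -/
noncomputable def ALMat (Q R : ℤ × ℝ → ℂ) (n : ℤ) (t : ℝ) (z : ℂ) : Matrix (Fin 2) (Fin 2) ℂ :=
  !![z, Q (n, t); R (n, t), z⁻¹]

/-- The time-evolution matrix `N(n,t,z)` of the Ablowitz–Ladik system. -/
noncomputable def ALTimeMat (Q R : ℤ × ℝ → ℂ) (n : ℤ) (t : ℝ) (z : ℂ) :
    Matrix (Fin 2) (Fin 2) ℂ :=
  (1 / 2 : ℂ) •
    !![z ^ 2 - z⁻¹ ^ 2 - 2 * Q (n, t) * R (n - 1, t),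
        2 * Q (n, t) * z + 2 * Q (n - 1, t) * z⁻¹;
      2 * R (n - 1, t) * z + 2 * R (n, t) * z⁻¹,
        z⁻¹ ^ 2 - z ^ 2 - 2 * R (n, t) * Q (n - 1, t)]

/-!
The diagonal of `M` does not depend on `t`, so `∂ₜM` is off-diagonal with entries `∂ₜQ`, `∂ₜR`.
For `z ≠ 0` all powers of `z` cancel in `N(n+1)M(n) − M(n)N(n)`: its diagonal vanishes and
its off-diagonal entries are the right-hand sides of the sd-mKdV system. Comparing entries gives
both directions, the forward one already at `z = 1`.
-/

section

variable (Q R : ℤ × ℝ → ℂ) (n : ℤ) (t : ℝ)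

lemma of_deriv_ALMat (z : ℂ) :
    (Matrix.of fun i j => deriv (fun u => ALMat Q R n u z i j) t) =
      !![0, deriv (fun u => Q (n, u)) t; deriv (fun u => R (n, u)) t, 0] := by
  ext i j
  fin_cases i <;> fin_cases j <;> simp [ALMat]

lemma ALTimeMat_mul_ALMat_sub_ALMat_mul_ALTimeMat {z : ℂ} (hz : z ≠ 0) :
    ALTimeMat Q R (n + 1) t z * ALMat Q R n t z - ALMat Q R n t z * ALTimeMat Q R n t z =
      !![0, (1 - Q (n, t) * R (n, t)) * (Q (n + 1, t) - Q (n - 1, t));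
        (1 - Q (n, t) * R (n, t)) * (R (n + 1, t) - R (n - 1, t)), 0] := by
  ext i j
  fin_cases i <;> fin_cases j <;>
    · simp [ALMat, ALTimeMat]
      field_simp
      ring

end

theorem zero_curvature_iff_coupled_sdmkdv_general (Q R : ℤ × ℝ → ℂ) :
    (∀ (n : ℤ) (t : ℝ) (z : ℂ), z ≠ 0 →
        (Matrix.of fun (i j : Fin 2) => deriv (fun u => ALMat Q R n u z i j) t) =
          ALTimeMat Q R (n + 1) t z * ALMat Q R n t z
            - ALMat Q R n t z * ALTimeMat Q R n t z) ↔
      (∀ (n : ℤ) (t : ℝ),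
        deriv (fun u => Q (n, u)) t =
            (1 - Q (n, t) * R (n, t)) * (Q (n + 1, t) - Q (n - 1, t)) ∧
        deriv (fun u => R (n, u)) t =
            (1 - Q (n, t) * R (n, t)) * (R (n + 1, t) - R (n - 1, t))) := by
  simp only [of_deriv_ALMat]
  constructor
  · intro h n t
    simpa [ALTimeMat_mul_ALMat_sub_ALMat_mul_ALTimeMat Q R n t one_ne_zero]
      using h n t 1 one_ne_zero
  · intro h n t z hz
    rw [ALTimeMat_mul_ALMat_sub_ALMat_mul_ALTimeMat Q R n t hz, (h n t).1, (h n t).2]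

/-- The zero-curvature (compatibility) equation
`∂ₜM(n,t,z) = N(n+1,t,z)·M(n,t,z) − M(n,t,z)·N(n,t,z)` holds for all `n`, `t` and all
`z ≠ 0` if and only if `(Q, R)` solves the coupled semi-discrete mKdV system. -/
theorem zero_curvature_iff_coupled_sdmkdv (Q R : ℤ × ℝ → ℂ)
    (hQ : ∀ (n : ℤ) (t : ℝ), DifferentiableAt ℝ (fun u => Q (n, u)) t)
    (hR : ∀ (n : ℤ) (t : ℝ), DifferentiableAt ℝ (fun u => R (n, u)) t) :
    (∀ (n : ℤ) (t : ℝ) (z : ℂ), z ≠ 0 →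
        (Matrix.of fun (i j : Fin 2) => deriv (fun u => ALMat Q R n u z i j) t) =
          ALTimeMat Q R (n + 1) t z * ALMat Q R n t z
            - ALMat Q R n t z * ALTimeMat Q R n t z) ↔
      (∀ (n : ℤ) (t : ℝ),
        deriv (fun u => Q (n, u)) t =
            (1 - Q (n, t) * R (n, t)) * (Q (n + 1, t) - Q (n - 1, t)) ∧
        deriv (fun u => R (n, u)) t =
            (1 - Q (n, t) * R (n, t)) * (R (n + 1, t) - R (n - 1, t))) :=
  zero_curvature_iff_coupled_sdmkdv_general Q R
end

section
/- Let a₀, b₀, k, c, d, s, β, η ∈ ℂ with a₀ ≠ 0, β ≠ 0, s² = (e^k − e^{−k})² + 4a₀b₀, β² = 1 − a₀b₀, and η = (1/2)(e^k + e^{−k})·s. Set μ = (e^k + e^{−k} + s)/(2β), ξ₊ = (e^k − e^{−k} − s)/(2a₀) and ξ₋ = (e^{−k} − e^k − s)/(2a₀), and note μ ≠ 0. Define φ, ψ : ℤ × ℝ → ℂ by φ(n,t) = c·μⁿ·e^{ηt} + d·μ^{−n}·e^{−ηt} and ψ(n,t) = −c·ξ₊·μⁿ·e^{ηt} + d·ξ₋·μ^{−n}·e^{−ηt}.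 Then for all n ∈ ℤ and t ∈ ℝ: (i) φ(n+1,t) = β⁻¹(e^k·φ(n,t) + a₀·ψ(n,t)); (ii) ψ(n+1,t) = β⁻¹(b₀·φ(n,t) + e^{−k}·ψ(n,t)); (iii) 2∂ₜφ(n,t) = (e^{2k} − e^{−2k})·φ(n,t) + 2a₀(e^k + e^{−k})·ψ(n,t); (iv) 2∂ₜψ(n,t) = 2b₀(e^k + e^{−k})·φ(n,t) + (e^{−2k} − e^{2k})·ψ(n,t). -/
/-!
Each of the two exponentials `μ^{±n} e^{±ηt}` carries a common eigenvector of the spatial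
matrix `M = [[e^k, a₀], [b₀, e^{-k}]]` and of the temporal one. The eigenvalues of `M` are the
roots `(e^k + e^{-k} ± s)/2` of its characteristic polynomial; their product is `det M = β²`,
so they are `βμ` and `βμ⁻¹`. The temporal matrix is `(e^k + e^{-k})(2M - (e^k + e^{-k}))`, a
polynomial in `M`, with eigenvalues `±2η` on the same eigenvectors. The system is linear, so the
superposition solves it.
-/

open Complex

noncomputable def expMode (C ζ ν : ℂ) (n : ℤ) (t : ℝ) : ℂ := C * ζ ^ n * exp (ν * t)

section expMode

variable {C ζ ν : ℂ} {n : ℤ} {t : ℝ}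

theorem expMode_add_one (hζ : ζ ≠ 0) : expMode C ζ ν (n + 1) t = ζ * expMode C ζ ν n t := by
  rw [expMode, expMode, zpow_add_one₀ hζ]
  ring

theorem hasDerivAt_expMode : HasDerivAt (expMode C ζ ν n) (ν * expMode C ζ ν n t) t := by
  have h := ((hasDerivAt_id t).ofReal_comp.const_mul ν).cexp.const_mul (C * ζ ^ n)
  refine h.congr_deriv ?_
  simp only [expMode, id, ofReal_one]
  ring

end expMode

section TwoByTwo

variable {K : Type*} [Field K] {p q r w s m y : K}

/-- `m = (p + w + s)/2` is a root of the characteristic polynomial of `[[p, q], [r, w]]`, so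
`(1, y)` is an eigenvector for `m` as soon as its first row is. -/
theorem eigen_snd_of_fst [NeZero (2 : K)] (hq : q ≠ 0) (hs : s ^ 2 = (p - w) ^ 2 + 4 * q * r)
    (hm : 2 * m = p + w + s) (hy : p + q * y = m) : r + w * y = m * y := by
  refine mul_left_cancel₀ (mul_ne_zero (mul_ne_zero two_ne_zero two_ne_zero) hq) ?_
  linear_combination (4 * w - 4 * m) * hy - hs + (p + w - s - 2 * m) * hm

/-- The temporal matrix `[[p² - w², 2q(p + w)], [2r(p + w), w² - p²]]` equals
`(p + w)(2M - (p + w))` for `M = [[p, q], [r, w]]`. -/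
theorem time_eigen_of_eigen (h₁ : p + q * y = m) (h₂ : r + w * y = m * y) :
    (p ^ 2 - w ^ 2) + 2 * q * (p + w) * y = (p + w) * (2 * m - (p + w)) ∧
    2 * r * (p + w) + (w ^ 2 - p ^ 2) * y = (p + w) * (2 * m - (p + w)) * y :=
  ⟨by linear_combination 2 * (p + w) * h₁, by linear_combination 2 * (p + w) * h₂⟩

/-- Vieta: the eigenvalues `(p + w ± s)/2` multiply to the determinant `β²`. -/
theorem ne_zero_and_two_mul_mul_inv_eq [NeZero (2 : K)] {β μ : K} (hβ : β ≠ 0)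
    (hs : s ^ 2 = (p - w) ^ 2 + 4 * q * r) (hdet : β ^ 2 = p * w - q * r)
    (hμ : 2 * (β * μ) = p + w + s) : μ ≠ 0 ∧ 2 * (β * μ⁻¹) = p + w - s := by
  have hprod : 2 * (β * μ) * (p + w - s) = 2 * 2 * β ^ 2 := by
    rw [hμ]
    linear_combination -hs - 4 * hdet
  have hμ0 : μ ≠ 0 := by
    rintro rfl
    simp [hβ, two_ne_zero] at hprod
  refine ⟨hμ0, mul_left_cancel₀ (mul_ne_zero (mul_ne_zero two_ne_zero hβ) hμ0) ?_⟩
  linear_combination 4 * β ^ 2 * mul_inv_cancel₀ hμ0 - hprod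

end TwoByTwo

theorem seedModes_solve_lax {p q r w s β μ η y₁ y₂ C₁ C₂ : ℂ} {φ ψ : ℤ × ℝ → ℂ}
    (hq : q ≠ 0) (hβ : β ≠ 0) (hs : s ^ 2 = (p - w) ^ 2 + 4 * q * r)
    (hdet : β ^ 2 = p * w - q * r) (hμ : 2 * (β * μ) = p + w + s)
    (hη : 2 * η = (p + w) * s)
    (hy₁ : 2 * (p + q * y₁) = p + w + s) (hy₂ : 2 * (p + q * y₂) = p + w - s)
    (hφ : ∀ n t, φ (n, t) = expMode C₁ μ η n t + expMode C₂ μ⁻¹ (-η) n t)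
    (hψ : ∀ n t, ψ (n, t) = y₁ * expMode C₁ μ η n t + y₂ * expMode C₂ μ⁻¹ (-η) n t) :
    μ ≠ 0 ∧
    (∀ n t, φ (n + 1, t) = β⁻¹ * (p * φ (n, t) + q * ψ (n, t))) ∧
    (∀ n t, ψ (n + 1, t) = β⁻¹ * (r * φ (n, t) + w * ψ (n, t))) ∧
    (∀ n t, 2 * deriv (fun u : ℝ => φ (n, u)) t =
      (p ^ 2 - w ^ 2) * φ (n, t) + 2 * q * (p + w) * ψ (n, t)) ∧
    (∀ n t, 2 * deriv (fun u : ℝ => ψ (n, u)) t =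
      2 * r * (p + w) * φ (n, t) + (w ^ 2 - p ^ 2) * ψ (n, t)) := by
  obtain ⟨hμ0, hμinv⟩ := ne_zero_and_two_mul_mul_inv_eq hβ hs hdet hμ
  have hs' : (-s) ^ 2 = (p - w) ^ 2 + 4 * q * r := by rw [neg_sq, hs]
  have h₁ : p + q * y₁ = β * μ := mul_left_cancel₀ two_ne_zero (hy₁.trans hμ.symm)
  have h₂ : p + q * y₂ = β * μ⁻¹ := mul_left_cancel₀ two_ne_zero (hy₂.trans hμinv.symm)
  have h₁' := eigen_snd_of_fst hq hs hμ h₁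
  have h₂' := eigen_snd_of_fst hq hs' (by rw [hμinv]; ring) h₂
  obtain ⟨t₁, t₁'⟩ := time_eigen_of_eigen h₁ h₁'
  obtain ⟨t₂, t₂'⟩ := time_eigen_of_eigen h₂ h₂'
  rw [show (p + w) * (2 * (β * μ) - (p + w)) = 2 * η by rw [hμ, hη]; ring] at t₁ t₁'
  rw [show (p + w) * (2 * (β * μ⁻¹) - (p + w)) = -(2 * η) by rw [hμinv, hη]; ring] at t₂ t₂'
  refine ⟨hμ0, fun n t => ?_, fun n t => ?_, fun n t => ?_, fun n t => ?_⟩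
  · rw [eq_inv_mul_iff_mul_eq₀ hβ, hφ, hφ, hψ, expMode_add_one hμ0,
      expMode_add_one (inv_ne_zero hμ0)]
    linear_combination (-expMode C₁ μ η n t) * h₁ - expMode C₂ μ⁻¹ (-η) n t * h₂
  · rw [eq_inv_mul_iff_mul_eq₀ hβ, hψ, hφ, hψ, expMode_add_one hμ0,
      expMode_add_one (inv_ne_zero hμ0)]
    linear_combination (-expMode C₁ μ η n t) * h₁' - expMode C₂ μ⁻¹ (-η) n t * h₂'
  · rw [show (fun u : ℝ => φ (n, u)) = _ from funext (hφ n),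
      (hasDerivAt_expMode.fun_add hasDerivAt_expMode).deriv, hφ, hψ]
    linear_combination (-expMode C₁ μ η n t) * t₁ - expMode C₂ μ⁻¹ (-η) n t * t₂
  · rw [show (fun u : ℝ => ψ (n, u)) = _ from funext (hψ n),
      ((hasDerivAt_expMode.const_mul y₁).fun_add (hasDerivAt_expMode.const_mul y₂)).deriv, hφ, hψ]
    linear_combination (-expMode C₁ μ η n t) * t₁' - expMode C₂ μ⁻¹ (-η) n t * t₂'

/-- The explicit seed functions `φ(n,t) = c·μⁿe^{ηt} + d·μ⁻ⁿe^{−ηt}`,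
`ψ(n,t) = −c·ξ₊·μⁿe^{ηt} + d·ξ₋·μ⁻ⁿe^{−ηt}` solve the scalar Lax system with constant
nonzero background `(q, r) = (a₀, b₀)`. -/
theorem seed_functions_solve_scalar_system
    (a₀ b₀ k c d s β η μ ξp ξm : ℂ)
    (ha₀ : a₀ ≠ 0) (hβ0 : β ≠ 0)
    (hs : s ^ 2 = (Complex.exp k - Complex.exp (-k)) ^ 2 + 4 * a₀ * b₀)
    (hβ2 : β ^ 2 = 1 - a₀ * b₀)
    (hη : η = (1 / 2) * (Complex.exp k + Complex.exp (-k)) * s)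
    (hμ : μ = (Complex.exp k + Complex.exp (-k) + s) / (2 * β))
    (hξp : ξp = (Complex.exp k - Complex.exp (-k) - s) / (2 * a₀))
    (hξm : ξm = (Complex.exp (-k) - Complex.exp k - s) / (2 * a₀))
    (φ ψ : ℤ × ℝ → ℂ)
    (hφ : ∀ (n : ℤ) (t : ℝ),
        φ (n, t) = c * μ ^ n * Complex.exp (η * t) + d * μ ^ (-n) * Complex.exp (-(η * t)))
    (hψ : ∀ (n : ℤ) (t : ℝ),
        ψ (n, t) = -(c * ξp) * μ ^ n * Complex.exp (η * t)
          + d * ξm * μ ^ (-n) * Complex.exp (-(η * t))) :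
    μ ≠ 0 ∧
    (∀ (n : ℤ) (t : ℝ),
        φ (n + 1, t) = β⁻¹ * (Complex.exp k * φ (n, t) + a₀ * ψ (n, t))) ∧
    (∀ (n : ℤ) (t : ℝ),
        ψ (n + 1, t) = β⁻¹ * (b₀ * φ (n, t) + Complex.exp (-k) * ψ (n, t))) ∧
    (∀ (n : ℤ) (t : ℝ),
        2 * deriv (fun u : ℝ => φ (n, u)) t =
          (Complex.exp (2 * k) - Complex.exp (-(2 * k))) * φ (n, t)
            + 2 * a₀ * (Complex.exp k + Complex.exp (-k)) * ψ (n, t)) ∧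
    (∀ (n : ℤ) (t : ℝ),
        2 * deriv (fun u : ℝ => ψ (n, u)) t =
          2 * b₀ * (Complex.exp k + Complex.exp (-k)) * φ (n, t)
            + (Complex.exp (-(2 * k)) - Complex.exp (2 * k)) * ψ (n, t)) := by
  set E := Complex.exp k
  set E' := Complex.exp (-k)
  have hEE : E * E' = 1 := by rw [← exp_add, add_neg_cancel, exp_zero]
  have hE2 : Complex.exp (2 * k) = E ^ 2 := by rw [← exp_nat_mul]; push_cast; ring_nf
  have hE'2 : Complex.exp (-(2 * k)) = E' ^ 2 := by rw [← exp_nat_mul]; push_cast; ring_nf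
  rw [hE2, hE'2]
  refine seedModes_solve_lax (μ := μ) (η := η) (C₁ := c) (C₂ := d) (y₁ := -ξp) (y₂ := ξm)
    ha₀ hβ0 hs (by rw [hEE, hβ2]) (by rw [hμ]; field_simp) (by rw [hη]; ring)
    (by rw [hξp]; field_simp; ring) (by rw [hξm]; field_simp; ring)
    (fun n t => ?_) (fun n t => ?_)
  · simp only [hφ, expMode, inv_zpow', neg_mul]
  · simp only [hψ, expMode, inv_zpow', neg_mul]
    ring
end

section
/- With the notation and hypotheses of the explicit first-order solution of the focusing sd-mKdV equation — a₀, k₁, c₁, d₁ ∈ ℝ, a₀ ≠ 0, c₁ ≠ 0, d₁ ≠ 0, (e^{k₁} − e^{−k₁})² > 4a₀², s = √((e^{k₁} − e^{−k₁})² − 4a₀²), β = √(1 + a₀²), μ = (e^{k₁} + e^{−k₁} + s)/(2β), η₁ = (1/2)(e^{k₁} + e^{−k₁})s, ξ₊ = (e^{k₁} − e^{−k₁} − s)/(2a₀), ξ₋ = (e^{−k₁} − e^{k₁} − s)/(2a₀), F(n,t) = −β(A₁μ^{2n}e^{2η₁t} + B₁μ^{−2n}e^{−2η₁t} + C₁),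 G(n,t) = β(A₂μ^{2n}e^{2η₁t} + B₂μ^{−2n}e^{−2η₁t} + C₂), with A₁ = c₁²μ(1 + ξ₊²), A₂ = c₁²μξ₊(e^{k₁} − e^{−k₁}), B₁ = d₁²μ⁻¹(1 + ξ₋²), B₂ = d₁²μ⁻¹ξ₋(e^{−k₁} − e^{k₁}), C₁ = 2c₁d₁(μ + μ⁻¹), C₂ = c₁d₁(μ⁻¹e^{−k₁}ξ₋ − μe^{−k₁}ξ₊ − μe^{k₁}ξ₋ + μ⁻¹e^{k₁}ξ₊) — suppose additionally μ > 1. Then for each fixed t ∈ ℝ, the solution Q = G/F lives on the constant nonzero background determined by a₀: the limits lim_{n→+∞} Q(n,t) and lim_{n→−∞} Q(n,t) exist and each limit L satisfies L² = a₀². -/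
/-!
`ξ₊` and `ξ₋` are roots of `a₀ ξ² ∓ (e^{k₁} - e^{-k₁}) ξ + a₀ = 0`, which is exactly
`A₂ = a₀ A₁` and `B₂ = a₀ B₁`. Both `F` and `G` are Laurent polynomials in
`x = μ^{2n} e^{2η₁t}`; as `n → +∞` (resp. `-∞`) the `x` (resp. `x⁻¹`) terms dominate since
`μ > 1`, so `Q = G/F` tends to `-A₂/A₁ = -a₀` (resp. `-B₂/B₁ = -a₀`).
-/

open Filter Topology

theorem tendsto_zpow_atTop_atTop_of_one_lt {K : Type*} [Field K] [LinearOrder K]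
    [IsStrictOrderedRing K] [Archimedean K] {c : K} (hc : 1 < c) :
    Tendsto (fun n : ℤ => c ^ n) atTop atTop := by
  refine tendsto_atTop_atTop_of_monotone' (zpow_right_mono₀ hc.le)
    (not_bddAbove_iff.2 fun b => ?_)
  obtain ⟨N, hN⟩ := ((tendsto_pow_atTop_atTop_of_one_lt hc).eventually_gt_atTop b).exists
  exact ⟨c ^ (N : ℤ), ⟨N, rfl⟩, by rwa [zpow_natCast]⟩

section LaurentLimits

variable {𝕜 : Type*} [Field 𝕜] [LinearOrder 𝕜] [IsStrictOrderedRing 𝕜] [TopologicalSpace 𝕜]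
  [OrderTopology 𝕜] {α : Type*} {l : Filter α} {x : α → 𝕜}

theorem tendsto_laurent_div_self (hx : Tendsto x l atTop) (a b c : 𝕜) :
    Tendsto (fun n => (a * x n + b * (x n)⁻¹ + c) / x n) l (𝓝 a) := by
  have hx_inv : Tendsto (fun n => (x n)⁻¹) l (𝓝 0) := tendsto_inv_atTop_zero.comp hx
  have hlim : Tendsto (fun n => a + b * (x n)⁻¹ ^ 2 + c * (x n)⁻¹) l (𝓝 a) := by
    simpa using ((hx_inv.pow 2).const_mul b).const_add a |>.add (hx_inv.const_mul c)
  refine hlim.congr' ?_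
  filter_upwards [hx.eventually_gt_atTop 0] with n hn
  field_simp

theorem tendsto_laurent_div_laurent (hx : Tendsto x l atTop) (a b c a' b' c' : 𝕜)
    (ha' : a' ≠ 0) :
    Tendsto (fun n => (a * x n + b * (x n)⁻¹ + c) / (a' * x n + b' * (x n)⁻¹ + c')) l
      (𝓝 (a / a')) := by
  refine ((tendsto_laurent_div_self hx a b c).div
    (tendsto_laurent_div_self hx a' b' c') ha').congr' ?_
  filter_upwards [hx.eventually_gt_atTop 0] with n hn
  exact div_div_div_cancel_right₀ hn.ne' _ _

theorem tendsto_soliton_ratio {y : α → 𝕜} (hx : Tendsto x l atTop) (hxy : ∀ n, x n * y n = 1)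
    {a β A₁ A₂ B₁ B₂ C₁ C₂ : 𝕜} (hβ : β ≠ 0) (hA₁ : A₁ ≠ 0) (hA : A₂ = a * A₁) :
    Tendsto (fun n => β * (A₂ * x n + B₂ * y n + C₂) / (-β * (A₁ * x n + B₁ * y n + C₁))) l
      (𝓝 (-a)) := by
  have hy : ∀ n, y n = (x n)⁻¹ := fun n => eq_inv_of_mul_eq_one_right (hxy n)
  convert tendsto_laurent_div_laurent hx (β * A₂) (β * B₂) (β * C₂) (-β * A₁) (-β * B₁)
    (-β * C₁) (by simp [hβ, hA₁]) using 1
  · funext n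
    rw [hy]
    ring
  · rw [hA]
    field_simp

end LaurentLimits

theorem mul_eq_mul_one_add_sq_of_eq_div {a D s ξ : ℝ} (ha : a ≠ 0)
    (hs : s ^ 2 = D ^ 2 - 4 * a ^ 2) (hξ : ξ = (D - s) / (2 * a)) :
    ξ * D = a * (1 + ξ ^ 2) := by
  subst hξ
  field_simp
  linear_combination -hs

theorem first_order_soliton_background_limits_general
    (a₀ k₁ c₁ d₁ s β μ η₁ ξp ξm A₁ A₂ B₁ B₂ C₁ C₂ : ℝ)
    (ha₀ : a₀ ≠ 0) (hc₁ : c₁ ≠ 0) (hd₁ : d₁ ≠ 0)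
    (hcond : (Real.exp k₁ - Real.exp (-k₁)) ^ 2 > 4 * a₀ ^ 2)
    (hs : s = Real.sqrt ((Real.exp k₁ - Real.exp (-k₁)) ^ 2 - 4 * a₀ ^ 2))
    (hβ : β = Real.sqrt (1 + a₀ ^ 2))
    (hμ1 : μ > 1)
    (hξp : ξp = (Real.exp k₁ - Real.exp (-k₁) - s) / (2 * a₀))
    (hξm : ξm = (Real.exp (-k₁) - Real.exp k₁ - s) / (2 * a₀))
    (hA₁ : A₁ = c₁ ^ 2 * μ * (1 + ξp ^ 2))
    (hA₂ : A₂ = c₁ ^ 2 * μ * ξp * (Real.exp k₁ - Real.exp (-k₁)))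
    (hB₁ : B₁ = d₁ ^ 2 * μ⁻¹ * (1 + ξm ^ 2))
    (hB₂ : B₂ = d₁ ^ 2 * μ⁻¹ * ξm * (Real.exp (-k₁) - Real.exp k₁))
    (F G : ℤ × ℝ → ℝ)
    (hF : ∀ (n : ℤ) (t : ℝ),
        F (n, t) = -β * (A₁ * μ ^ (2 * n) * Real.exp (2 * η₁ * t)
          + B₁ * μ ^ (-(2 * n)) * Real.exp (-(2 * η₁ * t)) + C₁))
    (hG : ∀ (n : ℤ) (t : ℝ),
        G (n, t) = β * (A₂ * μ ^ (2 * n) * Real.exp (2 * η₁ * t)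
          + B₂ * μ ^ (-(2 * n)) * Real.exp (-(2 * η₁ * t)) + C₂)) :
    ∀ t : ℝ,
      (∃ L : ℝ, Tendsto (fun n : ℤ => G (n, t) / F (n, t)) atTop (nhds L) ∧
        L ^ 2 = a₀ ^ 2) ∧
      (∃ L : ℝ, Tendsto (fun n : ℤ => G (n, t) / F (n, t)) atBot (nhds L) ∧
        L ^ 2 = a₀ ^ 2) := by
  intro t
  have hs_sq : s ^ 2 = (Real.exp k₁ - Real.exp (-k₁)) ^ 2 - 4 * a₀ ^ 2 := by
    rw [hs, Real.sq_sqrt (by linarith)]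
  have hA : A₂ = a₀ * A₁ := by
    rw [hA₂, hA₁, mul_assoc _ ξp, mul_eq_mul_one_add_sq_of_eq_div ha₀ hs_sq hξp]
    ring
  have hB : B₂ = a₀ * B₁ := by
    rw [hB₂, hB₁, mul_assoc _ ξm,
      mul_eq_mul_one_add_sq_of_eq_div ha₀ (by rw [hs_sq]; ring) hξm]
    ring
  have hβ0 : β ≠ 0 := by rw [hβ]; positivity
  have hμ0 : 0 < μ := by linarith
  have hA₁0 : A₁ ≠ 0 := by rw [hA₁]; positivity
  have hB₁0 : B₁ ≠ 0 := by rw [hB₁]; positivity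
  set x : ℤ → ℝ := fun n => (μ ^ (2 : ℤ)) ^ n * Real.exp (2 * η₁ * t)
  set y : ℤ → ℝ := fun n => (μ ^ (2 : ℤ)) ^ (-n) * Real.exp (-(2 * η₁ * t))
  have hxy : ∀ n, x n * y n = 1 := fun n => by
    simp only [x, y, zpow_neg, Real.exp_neg]; field_simp
  have hQ : ∀ n, G (n, t) / F (n, t) =
      β * (A₂ * x n + B₂ * y n + C₂) / (-β * (A₁ * x n + B₁ * y n + C₁)) := fun n => by
    simp only [hG, hF, x, y, ← zpow_mul, mul_neg, mul_assoc]
  have hμ_pow := tendsto_zpow_atTop_atTop_of_one_lt (one_lt_zpow₀ hμ1 two_pos)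
  have hx : Tendsto x atTop atTop := hμ_pow.atTop_mul_const (Real.exp_pos _)
  have hy : Tendsto y atBot atTop :=
    (hμ_pow.comp tendsto_neg_atBot_atTop).atTop_mul_const (Real.exp_pos _)
  refine ⟨⟨-a₀, ?_, by ring⟩, ⟨-a₀, ?_, by ring⟩⟩
  · simpa only [hQ] using tendsto_soliton_ratio hx hxy hβ0 hA₁0 hA
  · refine (tendsto_soliton_ratio (B₂ := A₂) (B₁ := A₁) (C₂ := C₂) (C₁ := C₁) hy
      (fun n => (mul_comm _ _).trans (hxy n)) hβ0 hB₁0 hB).congr fun n => ?_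
    rw [hQ]
    ring

/-- Eq. (5.3) of the paper: for fixed `t`, the explicit first-order soliton `Q = G/F`
of the focusing sd-mKdV equation tends, as `n → ±∞`, to a constant background level `L`
with `L² = a₀²`. -/
theorem first_order_soliton_background_limits
    (a₀ k₁ c₁ d₁ s β μ η₁ ξp ξm A₁ A₂ B₁ B₂ C₁ C₂ : ℝ)
    (ha₀ : a₀ ≠ 0) (hc₁ : c₁ ≠ 0) (hd₁ : d₁ ≠ 0)
    (hcond : (Real.exp k₁ - Real.exp (-k₁)) ^ 2 > 4 * a₀ ^ 2)
    (hs : s = Real.sqrt ((Real.exp k₁ - Real.exp (-k₁)) ^ 2 - 4 * a₀ ^ 2))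
    (hβ : β = Real.sqrt (1 + a₀ ^ 2))
    (hμ : μ = (Real.exp k₁ + Real.exp (-k₁) + s) / (2 * β))
    (hμ1 : μ > 1)
    (hη : η₁ = (1 / 2) * (Real.exp k₁ + Real.exp (-k₁)) * s)
    (hξp : ξp = (Real.exp k₁ - Real.exp (-k₁) - s) / (2 * a₀))
    (hξm : ξm = (Real.exp (-k₁) - Real.exp k₁ - s) / (2 * a₀))
    (hA₁ : A₁ = c₁ ^ 2 * μ * (1 + ξp ^ 2))
    (hA₂ : A₂ = c₁ ^ 2 * μ * ξp * (Real.exp k₁ - Real.exp (-k₁)))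
    (hB₁ : B₁ = d₁ ^ 2 * μ⁻¹ * (1 + ξm ^ 2))
    (hB₂ : B₂ = d₁ ^ 2 * μ⁻¹ * ξm * (Real.exp (-k₁) - Real.exp k₁))
    (hC₁ : C₁ = 2 * c₁ * d₁ * (μ + μ⁻¹))
    (hC₂ : C₂ = c₁ * d₁ * (μ⁻¹ * Real.exp (-k₁) * ξm - μ * Real.exp (-k₁) * ξp
      - μ * Real.exp k₁ * ξm + μ⁻¹ * Real.exp k₁ * ξp))
    (F G : ℤ × ℝ → ℝ)
    (hF : ∀ (n : ℤ) (t : ℝ),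
        F (n, t) = -β * (A₁ * μ ^ (2 * n) * Real.exp (2 * η₁ * t)
          + B₁ * μ ^ (-(2 * n)) * Real.exp (-(2 * η₁ * t)) + C₁))
    (hG : ∀ (n : ℤ) (t : ℝ),
        G (n, t) = β * (A₂ * μ ^ (2 * n) * Real.exp (2 * η₁ * t)
          + B₂ * μ ^ (-(2 * n)) * Real.exp (-(2 * η₁ * t)) + C₂)) :
    ∀ t : ℝ,
      (∃ L : ℝ, Tendsto (fun n : ℤ => G (n, t) / F (n, t)) atTop (nhds L) ∧
        L ^ 2 = a₀ ^ 2) ∧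
      (∃ L : ℝ, Tendsto (fun n : ℤ => G (n, t) / F (n, t)) atBot (nhds L) ∧
        L ^ 2 = a₀ ^ 2) :=
  first_order_soliton_background_limits_general a₀ k₁ c₁ d₁ s β μ η₁ ξp ξm A₁ A₂ B₁ B₂ C₁ C₂ ha₀ hc₁
    hd₁ hcond hs hβ hμ1 hξp hξm hA₁ hA₂ hB₁ hB₂ F G hF hG
end

section
/- Let a₀ ∈ ℝ with 0 < a₀² < 1 and let k = iθ be purely imaginary with θ ∈ ℝ and sin²θ < a₀². Set s = √(4a₀² − 4sin²θ) ∈ ℝ (so that s² = (e^k − e^{−k})² + 4a₀²), μ = (e^k + e^{−k} + s)/(2√(1 − a₀²)), η = (1/2)(e^k + e^{−k})·s and ξ = (e^k − e^{−k} − s)/(2a₀). Then μ and η are real numbers and |ξ| = 1. -/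
open Complex

/-! For `k = iθ` one has `e^k + e^{-k} = 2 cos θ` and `e^k - e^{-k} = 2i sin θ`, so `μ` and `η`
are real, while `ξ = (2i sin θ - s) / (2a₀)` has modulus `√(4 sin²θ + s²) / |2a₀| = 1`
because `s² = 4a₀² - 4 sin²θ`. -/

theorem Complex.norm_mul_I_sub_div_eq_one {x y a : ℝ} (ha : a ≠ 0) (h : x ^ 2 + y ^ 2 = a ^ 2) :
    ‖((x : ℂ) * I - y) / a‖ = 1 := by
  rw [norm_div, norm_real, Real.norm_eq_abs, div_eq_one_iff_eq (abs_ne_zero.mpr ha),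
    sub_eq_add_neg, add_comm, ← ofReal_neg, norm_add_mul_I, neg_sq, add_comm, h,
    Real.sqrt_sq_eq_abs]

theorem defocusing_soliton_case_general (a₀ θ : ℝ)
    (ha₀ : 0 < a₀ ^ 2)
    (hθ : Real.sin θ ^ 2 < a₀ ^ 2)
    (k s μ η ξ : ℂ)
    (hk : k = Complex.I * θ)
    (hs : s = (Real.sqrt (4 * a₀ ^ 2 - 4 * Real.sin θ ^ 2) : ℂ))
    (hμ : μ = (Complex.exp k + Complex.exp (-k) + s) /
      (2 * (Real.sqrt (1 - a₀ ^ 2) : ℂ)))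
    (hη : η = (1 / 2) * (Complex.exp k + Complex.exp (-k)) * s)
    (hξ : ξ = (Complex.exp k - Complex.exp (-k) - s) / (2 * (a₀ : ℂ))) :
    μ.im = 0 ∧ η.im = 0 ∧ ‖ξ‖ = 1 := by
  have hsum : exp k + exp (-k) = (2 * Real.cos θ : ℝ) := by
    rw [← two_cosh, hk, mul_comm I, cosh_mul_I, ofReal_mul, ofReal_cos, ofReal_ofNat]
  have hdiff : exp k - exp (-k) = (2 * Real.sin θ : ℝ) * I := by
    rw [← two_sinh, hk, mul_comm I, sinh_mul_I, ofReal_mul, ofReal_sin, ofReal_ofNat, mul_assoc]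
  subst hs hμ hη hξ
  rw [hsum, hdiff]
  refine ⟨by norm_cast, by simp, ?_⟩
  have hs_sq : Real.sqrt (4 * a₀ ^ 2 - 4 * Real.sin θ ^ 2) ^ 2 = 4 * a₀ ^ 2 - 4 * Real.sin θ ^ 2 :=
    Real.sq_sqrt (by linarith [sq_nonneg (Real.sin θ)])
  exact_mod_cast norm_mul_I_sub_div_eq_one (by simpa using ha₀.ne') (by rw [hs_sq]; ring)

/-- Section 5.2, first special case: for the defocusing reverse-space-time background,
when `k = iθ` is purely imaginary with `sin²θ < a₀²` and `0 < a₀² < 1`, the dispersion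
quantities `μ` and `η` are real and `|ξ| = 1`, so the first-order solution is a
soliton. -/
theorem defocusing_soliton_case (a₀ θ : ℝ)
    (ha₀ : 0 < a₀ ^ 2) (ha₀' : a₀ ^ 2 < 1)
    (hθ : Real.sin θ ^ 2 < a₀ ^ 2)
    (k s μ η ξ : ℂ)
    (hk : k = Complex.I * θ)
    (hs : s = (Real.sqrt (4 * a₀ ^ 2 - 4 * Real.sin θ ^ 2) : ℂ))
    (hμ : μ = (Complex.exp k + Complex.exp (-k) + s) /
      (2 * (Real.sqrt (1 - a₀ ^ 2) : ℂ)))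
    (hη : η = (1 / 2) * (Complex.exp k + Complex.exp (-k)) * s)
    (hξ : ξ = (Complex.exp k - Complex.exp (-k) - s) / (2 * (a₀ : ℂ))) :
    μ.im = 0 ∧ η.im = 0 ∧ ‖ξ‖ = 1 :=
  defocusing_soliton_case_general a₀ θ ha₀ hθ k s μ η ξ hk hs hμ hη hξ
end
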